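/- arXiv:2304.08213 — 3 statements merged into one kernel-verified Lean document; each statement's English description precedes it below -/
import Mathlib

section
/- Let (X, d) be a metric space and u : [0,∞) → X. Suppose that for every k ∈ ℕ and every f : ℕ → ℕ there exists n ∈ ℕ with d(u(t), u(t')) ≤ 1/(k+1) for all t, t' ∈ [n, n + f(n)]. Then u(t) is Cauchy as t → ∞: for every ε > 0 there exists N such that d(u(t), u(t')) ≤ ε for all t, t' ≥ N. -/
open Set

theorem stmt_8 {X : Type*} [MetricSpace X] (u : ℝ → X)
    (hmeta : ∀ k : ℕ, ∀ f : ℕ → ℕ, ∃ n : ℕ,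
      ∀ t ∈ Icc (n : ℝ) (n + f n), ∀ t' ∈ Icc (n : ℝ) (n + f n),
        dist (u t) (u t') ≤ 1 / (k + 1)) :
    ∀ ε > (0:ℝ), ∃ N : ℝ, ∀ t ≥ N, ∀ t' ≥ N, dist (u t) (u t') ≤ ε := by
  by_contra h
  push_neg at h
  obtain ⟨ε, hε, hbad⟩ := h
  obtain ⟨k, hk⟩ := exists_nat_one_div_lt hε
  choose t ht t' ht' hd using hbad
  set f : ℕ → ℕ := fun n => ⌈max (t n) (t' n)⌉₊ with hf
  obtain ⟨n, hn⟩ := hmeta k f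
  have h1 : (f n : ℝ) ≥ max (t (n : ℝ)) (t' (n : ℝ)) := Nat.le_ceil _
  have hn0 : (0:ℝ) ≤ n := Nat.cast_nonneg n
  have htn : t (n : ℝ) ∈ Icc (n : ℝ) (n + f n) := by
    constructor
    · exact ht _
    · have : t (n : ℝ) ≤ max (t (n:ℝ)) (t' (n:ℝ)) := le_max_left _ _
      linarith
  have htn' : t' (n : ℝ) ∈ Icc (n : ℝ) (n + f n) := by
    constructor
    · exact ht' _
    · have : t' (n : ℝ) ≤ max (t (n:ℝ)) (t' (n:ℝ)) := le_max_right _ _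
      linarith
  have := hn _ htn _ htn'
  have hdn := hd (n : ℝ)
  have : (1:ℝ) / (k + 1) < ε := by exact_mod_cast hk
  linarith
end

section
/- Let X be a normed space, C ⊆ X, and (S(t))_{t≥0} a semigroup of 1-Lipschitz self-maps of C (S(t+s) = S(t)∘S(s), S(0) = id). Let u : [0,∞) → C be an almost-orbit with rate of metastability Φ: for all k ∈ ℕ and f : ℕ → ℕ there is n ≤ Φ(k, f) such that ‖S(t)u(n) - u(t+n)‖ ≤ 1/(k+1) for all t ∈ [0, f(n)]. Then for all k, N ∈ ℕ and f : ℕ → ℕ, there exists n ∈ [N, max{N, Φ(2k+1, h_{N,f})}], where h_{N,f}(m) := f(max{N, m}) + max{N, m} - m, such that ‖S(t)u(n) - u(t+n)‖ ≤ 1/(k+1) for all t ∈ [0, f(n)]. -/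
open Set

theorem stmt_11 {X : Type*} [NormedAddCommGroup X]
    (C : Set X) (S : ℝ → X → X)
    (hmaps : ∀ t ≥ (0:ℝ), ∀ a ∈ C, S t a ∈ C)
    (hlip : ∀ t ≥ (0:ℝ), ∀ a ∈ C, ∀ b ∈ C, ‖S t a - S t b‖ ≤ ‖a - b‖)
    (hsemi : ∀ t ≥ (0:ℝ), ∀ s ≥ (0:ℝ), ∀ a ∈ C, S (t + s) a = S t (S s a))
    (hid : ∀ a ∈ C, S 0 a = a)
    (u : ℝ → X) (hu : ∀ t ≥ (0:ℝ), u t ∈ C)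
    (Φ : ℕ → (ℕ → ℕ) → ℕ)
    (hΦ : ∀ k : ℕ, ∀ f : ℕ → ℕ, ∃ n ≤ Φ k f,
      ∀ t ∈ Icc (0:ℝ) (f n), ‖S t (u n) - u (t + n)‖ ≤ 1 / (k + 1)) :
    ∀ k N : ℕ, ∀ f : ℕ → ℕ,
      ∃ n ∈ Icc N (max N (Φ (2 * k + 1) (fun m => f (max N m) + max N m - m))),
        ∀ t ∈ Icc (0:ℝ) (f n), ‖S t (u n) - u (t + n)‖ ≤ 1 / (k + 1) := by
  intro k N f
  obtain ⟨n, hnle, hn⟩ := hΦ (2 * k + 1) (fun m => f (max N m) + max N m - m)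
  set n' := max N n with hn'
  set d := n' - n with hd
  have hnn' : n ≤ n' := le_max_right _ _
  have hdn : d + n = n' := Nat.sub_add_cancel hnn'
  refine ⟨n', ⟨le_max_left _ _, max_le_max le_rfl hnle⟩, ?_⟩
  intro t ht
  obtain ⟨ht0, htf⟩ := ht
  have hhn : f (max N n) + max N n - n = f n' + d := by
    simp only [hn', hd]; omega
  have hdR : (d : ℝ) ≥ 0 := Nat.cast_nonneg d
  have huC : u n ∈ C := hu n (Nat.cast_nonneg n)
  have hun'C : u n' ∈ C := hu n' (Nat.cast_nonneg n')
  have hSdC : S d (u n) ∈ C := hmaps d hdR _ huC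
  -- bound 1 : at s = d
  have h1 : ‖S (d : ℝ) (u n) - u ((d : ℝ) + n)‖ ≤ 1 / ((2 * k + 1 : ℕ) + 1) := by
    apply hn d ⟨hdR, ?_⟩
    rw [hhn]
    push_cast
    linarith [Nat.cast_nonneg (α := ℝ) (f n')]
  -- bound 2 : at s = t + d
  have h2 : ‖S (t + (d : ℝ)) (u n) - u ((t + (d : ℝ)) + n)‖ ≤ 1 / ((2 * k + 1 : ℕ) + 1) := by
    apply hn (t + d) ⟨by linarith, ?_⟩
    rw [hhn]
    push_cast
    linarith
  have hsplit : S (t + (d : ℝ)) (u n) = S t (S d (u n)) := hsemi t ht0 d hdR _ huC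
  have hcast : ((d : ℝ) + n) = (n' : ℝ) := by
    push_cast [← hdn]; ring
  have h1' : ‖u n' - S (d:ℝ) (u n)‖ ≤ 1 / ((2 * k + 1 : ℕ) + 1) := by
    rw [norm_sub_rev, ← hcast]; exact h1
  have hlip' : ‖S t (u n') - S t (S d (u n))‖ ≤ ‖u n' - S (d:ℝ) (u n)‖ :=
    hlip t ht0 _ hun'C _ hSdC
  have h2' : ‖S t (S d (u n)) - u (t + n')‖ ≤ 1 / ((2 * k + 1 : ℕ) + 1) := by
    rw [← hsplit]
    have : (t + (d : ℝ)) + n = t + n' := by rw [add_assoc, hcast]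
    rw [← this]; exact h2
  have htri : ‖S t (u n') - u (t + n')‖ ≤
      ‖S t (u n') - S t (S d (u n))‖ + ‖S t (S d (u n)) - u (t + n')‖ :=
    norm_sub_le_norm_sub_add_norm_sub _ _ _
  have hfin : (1 : ℝ) / ((2 * k + 1 : ℕ) + 1) + 1 / ((2 * k + 1 : ℕ) + 1) = 1 / (k + 1) := by
    push_cast
    have : (2 * (k:ℝ) + 1 + 1) ≠ 0 := by positivity
    field_simp
    ring
  calc ‖S t (u n') - u (t + n')‖ ≤ _ + _ := htri
    _ ≤ 1 / ((2 * k + 1 : ℕ) + 1) + 1 / ((2 * k + 1 : ℕ) + 1) := by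
        exact add_le_add (hlip'.trans h1') h2'
    _ = 1 / (k + 1) := hfin
end

section
/- Let (X, d) be a metric space and u : ℕ → X (or u : [0,∞) → X). Suppose Γ : ℕ → ℕ is such that for every k ∈ ℕ and every f : ℕ → ℕ there exists n ≤ Γ(k) (the bound not depending on f) with d(u(t), u(t')) ≤ 1/(k+1) for all t, t' ∈ [n, n + f(n)]. Then for all k there exists n ≤ Γ(k) such that d(u(t), u(t')) ≤ 1/(k+1) for all t, t' ≥ n. -/
open Set

theorem stmt_13 {X : Type*} [MetricSpace X] (u : ℝ → X) (Γ : ℕ → ℕ)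
    (hmeta : ∀ k : ℕ, ∀ f : ℕ → ℕ, ∃ n ≤ Γ k,
      ∀ t ∈ Icc (n : ℝ) (n + f n), ∀ t' ∈ Icc (n : ℝ) (n + f n),
        dist (u t) (u t') ≤ 1 / (k + 1)) :
    ∀ k : ℕ, ∃ n ≤ Γ k, ∀ t ≥ (n : ℝ), ∀ t' ≥ (n : ℝ),
      dist (u t) (u t') ≤ 1 / (k + 1) := by
  intro k
  by_contra h
  push_neg at h
  choose t ht t' ht' hd using h
  classical
  set f : ℕ → ℕ := fun n => if hn : n ≤ Γ k then ⌈max (t n hn) (t' n hn)⌉₊ else 0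
    with hf
  obtain ⟨n, hn, hP⟩ := hmeta k f
  have hfn : (f n : ℝ) = ⌈max (t n hn) (t' n hn)⌉₊ := by simp [hf, hn]
  have hmax : max (t n hn) (t' n hn) ≤ (n : ℝ) + f n := by
    rw [hfn]
    calc max (t n hn) (t' n hn) ≤ (⌈max (t n hn) (t' n hn)⌉₊ : ℝ) := Nat.le_ceil _
    _ ≤ (n : ℝ) + ⌈max (t n hn) (t' n hn)⌉₊ := le_add_of_nonneg_left (Nat.cast_nonneg n)
  have h1 : t n hn ∈ Icc (n : ℝ) ((n : ℝ) + f n) :=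
    ⟨ht n hn, le_trans (le_max_left _ _) hmax⟩
  have h2 : t' n hn ∈ Icc (n : ℝ) ((n : ℝ) + f n) :=
    ⟨ht' n hn, le_trans (le_max_right _ _) hmax⟩
  exact absurd (hP _ h1 _ h2) (not_le.mpr (hd n hn))
end
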